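/- If n ≡ 0 (mod 3), then removing the single horizontal edge x_{(n−1)1}x_{n1} from G_{n,2} increases the total domination number: γ_t(G_{n,2} − x_{(n−1)1}x_{n1}) ≥ γ_t(G_{n,2}) + 1. Consequently b_t(G_{n,2}) = 1 for n ≡ 0 (mod 3). -/

import Mathlib

/-! When `3 ∣ n`, the `2n/3` vertices in the middle column of each block of three consecutive
columns totally dominate `P_n □ P_2`.
After deleting the edge `x_{(n-1)1} x_{n1}`, the vertex `x_{n1}` has `x_{n2}` as its only
neighbour, so `x_{n2}` lies in every total dominating set `D`. Since `x_{n2}` has degree `2` and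
every vertex has degree at most `3`, counting neighbourhoods gives `2n ≤ 2 + 3 (|D| - 1)`, i.e.
`|D| > 2n/3`. A single edge thus raises `γ_t`, and deleting no edge cannot, so `b_t = 1`. -/

open SimpleGraph

/-- The grid graph `G_{n,m}`, the Cartesian (box) product of paths `P_n` and `P_m`. -/
def gridGraph (n m : ℕ) : SimpleGraph (Fin n × Fin m) :=
  (pathGraph n) □ (pathGraph m)

/-- `D` is a total dominating set of `G`: every vertex has a neighbor in `D`. -/
def IsTotalDomSet {V : Type*} (G : SimpleGraph V) (D : Set V) : Prop :=
  ∀ v : V, ∃ u ∈ D, G.Adj v u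

/-- The total domination number of `G`. -/
noncomputable def totalDomNum {V : Type*} [Fintype V] (G : SimpleGraph V) : ℕ :=
  sInf {k | ∃ D : Finset V, IsTotalDomSet G ↑D ∧ D.card = k}

/-- The total bondage number: the least number of edges whose removal increases
the total domination number. -/
noncomputable def totalBondage {V : Type*} [Fintype V] (G : SimpleGraph V) : ℕ :=
  sInf {k | ∃ F : Finset (Sym2 V), ↑F ⊆ G.edgeSet ∧ F.card = k ∧
    totalDomNum (G.deleteEdges ↑F) > totalDomNum G}

open Finset

namespace SimpleGraph

lemma pathGraph_degree_le_two {n : ℕ} (i : Fin n) [Fintype ((pathGraph n).neighborSet i)] :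
    (pathGraph n).degree i ≤ 2 := by
  rw [← card_neighborFinset_eq_degree, ← card_map Fin.valEmbedding]
  calc _ ≤ #({i.val - 1, i.val + 1} : Finset ℕ) := card_le_card fun j hj => by
          simp only [mem_map, mem_neighborFinset, pathGraph_adj, Fin.valEmbedding_apply] at hj
          simp only [mem_insert, mem_singleton]
          omega
    _ ≤ 2 := card_le_two

lemma pathGraph_degree_le_one_of_endpoint {n : ℕ} (i : Fin n) (hi : i.val = 0 ∨ i.val + 1 = n)
    [Fintype ((pathGraph n).neighborSet i)] : (pathGraph n).degree i ≤ 1 := by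
  rw [← card_neighborFinset_eq_degree, ← card_map Fin.valEmbedding]
  calc _ ≤ #({if i.val = 0 then 1 else i.val - 1} : Finset ℕ) := card_le_card fun j hj => by
          simp only [mem_map, mem_neighborFinset, pathGraph_adj, Fin.valEmbedding_apply] at hj
          rw [mem_singleton]
          split_ifs <;> omega
    _ = 1 := card_singleton _

end SimpleGraph

namespace IsTotalDomSet

variable {V : Type*} {G : SimpleGraph V} {D : Finset V}

lemma mem_of_forall_adj_eq {x y : V} (hD : IsTotalDomSet G D) (hx : ∀ v, G.Adj x v → v = y) :
    y ∈ D := by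
  obtain ⟨u, hu, hxu⟩ := hD x
  exact hx u hxu ▸ hu

lemma card_le_sum_degree [Fintype V] [DecidableRel G.Adj] (hD : IsTotalDomSet G D) :
    Fintype.card V ≤ ∑ u ∈ D, G.degree u := by
  classical
  calc Fintype.card V = #(univ : Finset V) := card_univ.symm
    _ ≤ #(D.biUnion fun u => G.neighborFinset u) := card_le_card fun v _ => by
        obtain ⟨u, hu, hvu⟩ := hD v
        exact mem_biUnion.2 ⟨u, hu, (mem_neighborFinset _ _ _).2 hvu.symm⟩
    _ ≤ ∑ u ∈ D, G.degree u := card_biUnion_le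

-- `|V| ≤ δ + (|D| - 1) Δ`, stated without truncated subtraction.
lemma card_add_le_of_degree_le [Fintype V] [DecidableRel G.Adj] {w : V} {δ Δ : ℕ}
    (hD : IsTotalDomSet G D) (hw : w ∈ D) (hδ : G.degree w ≤ δ) (hΔ : ∀ v, G.degree v ≤ Δ) :
    Fintype.card V + Δ ≤ δ + #D * Δ := by
  classical
  have hrest : ∑ u ∈ D.erase w, G.degree u ≤ #(D.erase w) * Δ :=
    sum_le_card_nsmul _ _ _ fun v _ => hΔ v
  have hcard : #D = #(D.erase w) + 1 := (card_erase_add_one hw).symm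
  have := hD.card_le_sum_degree
  rw [← add_sum_erase D _ hw] at this
  rw [hcard, add_one_mul]
  omega

end IsTotalDomSet

section totalDomNum

variable {V : Type*} [Fintype V] {G : SimpleGraph V}

lemma totalDomNum_le_card {D : Finset V} (hD : IsTotalDomSet G D) : totalDomNum G ≤ #D :=
  Nat.sInf_le ⟨D, hD, rfl⟩

lemma exists_isTotalDomSet_card_eq_totalDomNum (hG : ∀ v, ∃ u, G.Adj v u) :
    ∃ D : Finset V, IsTotalDomSet G D ∧ #D = totalDomNum G := by
  classical
  have huniv : IsTotalDomSet G (univ : Finset V) := fun v => by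
    obtain ⟨u, hu⟩ := hG v
    exact ⟨u, by simp, hu⟩
  exact Nat.sInf_mem (s := {k | ∃ D : Finset V, IsTotalDomSet G D ∧ #D = k}) ⟨_, univ, huniv, rfl⟩

lemma totalBondage_eq_one {e : Sym2 V} (he : e ∈ G.edgeSet)
    (h : totalDomNum G < totalDomNum (G.deleteEdges {e})) : totalBondage G = 1 := by
  classical
  have hone : 1 ∈ {k | ∃ F : Finset (Sym2 V), ↑F ⊆ G.edgeSet ∧ #F = k ∧
      totalDomNum (G.deleteEdges ↑F) > totalDomNum G} :=
    ⟨{e}, by simpa using he, card_singleton e, by simpa using h⟩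
  refine le_antisymm (Nat.sInf_le hone) ?_
  rw [totalBondage, Nat.one_le_iff_ne_zero, Ne, Nat.sInf_eq_zero]
  rintro (⟨F, -, hF, hlt⟩ | hempty)
  · rw [card_eq_zero] at hF
    simp [hF] at hlt
  · exact hempty.subset hone

end totalDomNum

lemma gridGraph_degree {n m : ℕ} (v : Fin n × Fin m) [Fintype ((pathGraph n).neighborSet v.1)]
    [Fintype ((pathGraph m).neighborSet v.2)] [Fintype ((gridGraph n m).neighborSet v)] :
    (gridGraph n m).degree v = (pathGraph n).degree v.1 + (pathGraph m).degree v.2 := by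
  rw [← degree_boxProd, ← card_neighborSet_eq_degree, ← card_neighborSet_eq_degree]
  exact Fintype.card_congr' rfl

lemma gridGraph_two_degree_le_three {n : ℕ} (v : Fin n × Fin 2)
    [Fintype ((gridGraph n 2).neighborSet v)] : (gridGraph n 2).degree v ≤ 3 := by
  classical
  have := pathGraph_degree_le_two v.1
  have := pathGraph_degree_le_one_of_endpoint v.2 (by omega)
  rw [gridGraph_degree]
  omega

lemma gridGraph_two_degree_le_two_of_last {n : ℕ} (v : Fin n × Fin 2) (hv : v.1.val + 1 = n)
    [Fintype ((gridGraph n 2).neighborSet v)] : (gridGraph n 2).degree v ≤ 2 := by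
  classical
  have := pathGraph_degree_le_one_of_endpoint v.1 (.inr hv)
  have := pathGraph_degree_le_one_of_endpoint v.2 (by omega)
  rw [gridGraph_degree]
  omega

lemma gridGraph_adj_iff {n m : ℕ} {v w : Fin n × Fin m} :
    (gridGraph n m).Adj v w ↔
      ((v.1.val + 1 = w.1.val ∨ w.1.val + 1 = v.1.val) ∧ v.2 = w.2) ∨
      ((v.2.val + 1 = w.2.val ∨ w.2.val + 1 = v.2.val) ∧ v.1 = w.1) := by
  simp only [gridGraph, boxProd_adj, pathGraph_adj]

lemma gridGraph_two_adj_rev {n : ℕ} (v : Fin n × Fin 2) :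
    (gridGraph n 2).Adj v (v.1, v.2.rev) := by
  rw [gridGraph_adj_iff]
  right
  simp only [Fin.val_rev, and_true]
  omega

lemma three_mul_totalDomNum_gridGraph_two_le {n : ℕ} (h : 3 ∣ n) :
    3 * totalDomNum (gridGraph n 2) ≤ 2 * n := by
  classical
  obtain ⟨k, rfl⟩ := h
  let f : Fin k × Fin 2 → Fin (3 * k) × Fin 2 := fun p => (⟨3 * p.1 + 1, by omega⟩, p.2)
  have hf : Function.Injective f := fun p q hpq => by
    simp only [f, Prod.mk.injEq, Fin.mk.injEq] at hpq
    exact Prod.ext (Fin.ext (by omega)) hpq.2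
  have hdom : IsTotalDomSet (gridGraph (3 * k) 2) (univ.image f : Finset _) := by
    intro v
    have hblock : v.1.val / 3 < k := by omega
    by_cases hv : v.1.val % 3 = 1
    · refine ⟨(v.1, v.2.rev), ?_, gridGraph_two_adj_rev v⟩
      exact mem_image.2 ⟨(⟨v.1.val / 3, hblock⟩, v.2.rev), mem_univ _,
        Prod.ext (Fin.ext (by simp only [f]; omega)) rfl⟩
    · refine ⟨f (⟨v.1.val / 3, hblock⟩, v.2), mem_image_of_mem _ (mem_univ _), ?_⟩
      rw [gridGraph_adj_iff]
      left
      simp only [f, and_true]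
      omega
  have := totalDomNum_le_card hdom
  rw [card_image_of_injective _ hf, card_univ, Fintype.card_prod, Fintype.card_fin,
    Fintype.card_fin] at this
  omega

-- The edge `x_{(n-1)1} x_{n1}` of the paper; rows and columns are indexed from `0` here.
def lastHorizontalEdge (n : ℕ) (hn : 2 ≤ n) : Sym2 (Fin n × Fin 2) :=
  s(((⟨n - 2, by omega⟩ : Fin n), (0 : Fin 2)), ((⟨n - 1, by omega⟩ : Fin n), (0 : Fin 2)))

lemma lastHorizontalEdge_mem_edgeSet (n : ℕ) (hn : 2 ≤ n) :
    lastHorizontalEdge n hn ∈ (gridGraph n 2).edgeSet := by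
  rw [lastHorizontalEdge, mem_edgeSet, gridGraph_adj_iff]
  left
  simp only [and_true]
  omega

lemma three_mul_totalDomNum_gridGraph_two_deleteEdges_ge (n : ℕ) (hn : 2 ≤ n) :
    2 * n + 1 ≤ 3 * totalDomNum ((gridGraph n 2).deleteEdges {lastHorizontalEdge n hn}) := by
  classical
  set G := (gridGraph n 2).deleteEdges {lastHorizontalEdge n hn}
  have hle : G ≤ gridGraph n 2 := deleteEdges_le _
  set x : Fin n × Fin 2 := (⟨n - 1, by omega⟩, 0)
  set y : Fin n × Fin 2 := (⟨n - 1, by omega⟩, 1)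
  have hx : ∀ v, G.Adj x v → v = y := by
    intro v hv
    simp only [G, lastHorizontalEdge, deleteEdges_adj, gridGraph_adj_iff, Set.mem_singleton_iff,
      Sym2.eq_iff, x, y, Prod.ext_iff, Fin.ext_iff, Fin.val_zero, Fin.val_one, and_true,
      true_and] at hv ⊢
    have := v.1.isLt
    omega
  have hG : ∀ v, ∃ u, G.Adj v u := fun v => ⟨(v.1, v.2.rev), by
    refine deleteEdges_adj.2 ⟨gridGraph_two_adj_rev v, ?_⟩
    simp only [lastHorizontalEdge, Set.mem_singleton_iff, Sym2.eq_iff, Prod.ext_iff, Fin.ext_iff,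
      Fin.val_rev, Fin.val_zero]
    omega⟩
  obtain ⟨D, hD, hcard⟩ := exists_isTotalDomSet_card_eq_totalDomNum hG
  have hdeg_y : G.degree y ≤ 2 := (degree_le_of_le hle).trans <|
    gridGraph_two_degree_le_two_of_last y (Nat.sub_add_cancel (by omega))
  have hdeg : ∀ v, G.degree v ≤ 3 := fun v =>
    (degree_le_of_le hle).trans (gridGraph_two_degree_le_three v)
  have := hD.card_add_le_of_degree_le (hD.mem_of_forall_adj_eq hx) hdeg_y hdeg
  rw [Fintype.card_prod, Fintype.card_fin, Fintype.card_fin, hcard] at this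
  omega

theorem total_bondage_grid_two_zero_mod_three (n : ℕ) (hn : 2 ≤ n) (h : n % 3 = 0) :
    totalDomNum ((gridGraph n 2).deleteEdges
        {s(((⟨n - 2, by omega⟩ : Fin n), (0 : Fin 2)), ((⟨n - 1, by omega⟩ : Fin n), (0 : Fin 2)))})
      ≥ totalDomNum (gridGraph n 2) + 1 ∧
    totalBondage (gridGraph n 2) = 1 := by
  have hlt : totalDomNum (gridGraph n 2) <
      totalDomNum ((gridGraph n 2).deleteEdges {lastHorizontalEdge n hn}) := by
    have := three_mul_totalDomNum_gridGraph_two_le (Nat.dvd_of_mod_eq_zero h)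
    have := three_mul_totalDomNum_gridGraph_two_deleteEdges_ge n hn
    omega
  exact ⟨hlt, totalBondage_eq_one (lastHorizontalEdge_mem_edgeSet n hn) hlt⟩
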